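/- Assume that the mapping F: ℝⁿ ⇒ ℝᵐ has locally closed graph at (x̄,ȳ) ∈ gph F and is strictly proto-differentiable at x̄ for ȳ. Then F is semismooth* at (x̄,ȳ). -/

import Mathlib

open Filter Topology Metric Set
open scoped RealInnerProductSpace NNReal ENNReal

noncomputable section

/-- Euclidean space `ℝⁿ`. -/
abbrev Euc (n : ℕ) : Type := EuclideanSpace ℝ (Fin n)

section NormedDefs

variable {X Y : Type*} [NormedAddCommGroup X] [NormedSpace ℝ X]
  [NormedAddCommGroup Y] [NormedSpace ℝ Y]

/-- The (Bouligand) tangent cone to `Ω` at `z`. -/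
def tanCone (Ω : Set X) (z : X) : Set X :=
  {w | ∃ (t : ℕ → ℝ) (wk : ℕ → X), (∀ k, 0 < t k) ∧ Tendsto t atTop (𝓝 0) ∧
      Tendsto wk atTop (𝓝 w) ∧ ∀ k, z + t k • wk k ∈ Ω}

/-- The regular (Clarke) tangent cone to `Ω` at `z`. -/
def clarkeCone (Ω : Set X) (z : X) : Set X :=
  {w | ∀ (zk : ℕ → X) (t : ℕ → ℝ), (∀ k, zk k ∈ Ω) → Tendsto zk atTop (𝓝 z) →
      (∀ k, 0 < t k) → Tendsto t atTop (𝓝 0) →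
      ∃ wk : ℕ → X, Tendsto wk atTop (𝓝 w) ∧ ∀ k, zk k + t k • wk k ∈ Ω}

/-- The paratingent cone to `Ω` at `z`. -/
def paraCone (Ω : Set X) (z : X) : Set X :=
  {w | ∃ (zk : ℕ → X) (t : ℕ → ℝ) (wk : ℕ → X), (∀ k, zk k ∈ Ω) ∧
      Tendsto zk atTop (𝓝 z) ∧ (∀ k, 0 < t k) ∧ Tendsto t atTop (𝓝 0) ∧
      Tendsto wk atTop (𝓝 w) ∧ ∀ k, zk k + t k • wk k ∈ Ω}

/-- `Ω` is strictly smooth at `z` if the Clarke tangent cone and the paratingent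
cone coincide there. -/
def StrictlySmoothAt (Ω : Set X) (z : X) : Prop := clarkeCone Ω z = paraCone Ω z

/-- `Ω` is geometrically derivable at `z`. -/
def GeomDerivableAt (Ω : Set X) (z : X) : Prop :=
  ∀ w ∈ tanCone Ω z, ∀ t : ℕ → ℝ, (∀ k, 0 < t k) → Tendsto t atTop (𝓝 0) →
    ∃ wk : ℕ → X, Tendsto wk atTop (𝓝 w) ∧ ∀ k, z + t k • wk k ∈ Ω

/-- `Ω` is locally closed at `z`. -/
def LocallyClosedAt (Ω : Set X) (z : X) : Prop :=
  ∃ V : Set X, V ∈ 𝓝 z ∧ IsClosed V ∧ IsClosed (Ω ∩ V)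

/-- The set `s` is a linear subspace. -/
def IsLinearSubspace (s : Set X) : Prop := ∃ S : Submodule ℝ X, (S : Set X) = s

/-- The set `s` is a linear subspace of dimension `d`. -/
def HasDim (s : Set X) (d : ℕ) : Prop :=
  ∃ S : Submodule ℝ X, (S : Set X) = s ∧ Module.finrank ℝ S = d

/-- The graph of a set-valued mapping. -/
def gphOf (Fm : X → Set Y) : Set (X × Y) := {p | p.2 ∈ Fm p.1}

/-- The graph of a single-valued mapping defined on `U`. -/
def gphOn (f : X → Y) (U : Set X) : Set (X × Y) := {p | p.1 ∈ U ∧ p.2 = f p.1}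

/-- `f` (defined on `U`) is strictly continuous (locally Lipschitz) at `xb`. -/
def StrictlyContinuousAt' (f : X → Y) (U : Set X) (xb : X) : Prop :=
  ∃ U' ∈ 𝓝 xb, U' ⊆ U ∧ ∃ κ : ℝ, 0 ≤ κ ∧
    ∀ x ∈ U', ∀ x' ∈ U', ‖f x - f x'‖ ≤ κ * ‖x - x'‖

/-- `f` (defined on `U`) is calm at `xb`. -/
def CalmAt' (f : X → Y) (U : Set X) (xb : X) : Prop :=
  ∃ U' ∈ 𝓝 xb, U' ⊆ U ∧ ∃ κ : ℝ, 0 ≤ κ ∧ ∀ x ∈ U', ‖f x - f xb‖ ≤ κ * ‖x - xb‖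

/-- `f` (defined on `U`) is strictly differentiable at `xb`. -/
def StrictDiffOnAt (f : X → Y) (U : Set X) (xb : X) : Prop :=
  ∃ A : X →L[ℝ] Y, ∀ ε : ℝ, 0 < ε → ∃ δ > 0, ∀ x ∈ U, ∀ x' ∈ U,
    ‖x - xb‖ < δ → ‖x' - xb‖ < δ → ‖f x' - f x - A (x' - x)‖ ≤ ε * ‖x' - x‖

/-- `f` (defined on `U`) is Fréchet differentiable at `xb`. -/
def FrechetDiffOnAt (f : X → Y) (U : Set X) (xb : X) : Prop :=
  ∃ A : X →L[ℝ] Y, ∀ ε : ℝ, 0 < ε → ∃ δ > 0, ∀ x ∈ U,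
    ‖x - xb‖ < δ → ‖f x - f xb - A (x - xb)‖ ≤ ε * ‖x - xb‖

/-- The B-Jacobian (Bouligand limiting Jacobian) of `f` at `xb`. -/
def BJacobian (f : X → Y) (U : Set X) (xb : X) : Set (X →L[ℝ] Y) :=
  {A | ∃ (xk : ℕ → X) (Ak : ℕ → X →L[ℝ] Y),
      (∀ k, xk k ∈ U ∧ HasFDerivAt f (Ak k) (xk k)) ∧
      Tendsto xk atTop (𝓝 xb) ∧ Tendsto Ak atTop (𝓝 A)}

/-- `Ω ⊆ X` is a Lipschitz manifold of dimension `d` (and codimension `c`) around `z`: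
up to a `C¹` change of coordinates `Φ`, `Ω` locally coincides with the graph of a
Lipschitz mapping `f : U → ℝᶜ`, `U ⊆ ℝᵈ` open. -/
def IsLipschitzManifoldAt (Ω : Set X) (d c : ℕ) (z : X) : Prop :=
  ∃ (W : Set X) (Φ : X → Euc d × Euc c) (Ψ : Euc d × Euc c → X)
    (U : Set (Euc d)) (f : Euc d → Euc c) (K : ℝ≥0),
    IsOpen W ∧ z ∈ W ∧ IsOpen (Φ '' W) ∧
    ContDiffOn ℝ 1 Φ W ∧ ContDiffOn ℝ 1 Ψ (Φ '' W) ∧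
    (∀ x ∈ W, Ψ (Φ x) = x) ∧ (∀ y ∈ Φ '' W, Φ (Ψ y) = y) ∧
    IsOpen U ∧ LipschitzOnWith K f U ∧
    Φ '' (Ω ∩ W) = {p | p.1 ∈ U ∧ p.2 = f p.1}

/-- As `IsLipschitzManifoldAt`, with the Lipschitz mapping `f` moreover strictly
differentiable at the transformed reference point. -/
def IsGraphStrictDiffAt (Ω : Set X) (d c : ℕ) (z : X) : Prop :=
  ∃ (W : Set X) (Φ : X → Euc d × Euc c) (Ψ : Euc d × Euc c → X)
    (U : Set (Euc d)) (f : Euc d → Euc c) (K : ℝ≥0),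
    IsOpen W ∧ z ∈ W ∧ IsOpen (Φ '' W) ∧
    ContDiffOn ℝ 1 Φ W ∧ ContDiffOn ℝ 1 Ψ (Φ '' W) ∧
    (∀ x ∈ W, Ψ (Φ x) = x) ∧ (∀ y ∈ Φ '' W, Φ (Ψ y) = y) ∧
    IsOpen U ∧ LipschitzOnWith K f U ∧
    Φ '' (Ω ∩ W) = {p | p.1 ∈ U ∧ p.2 = f p.1} ∧
    StrictDiffOnAt f U (Φ z).1

/-- Strong metric subregularity of a set-valued mapping at `(xb, yb)`. -/
def StronglySubregAt (Fm : X → Set Y) (xb : X) (yb : Y) : Prop :=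
  ∃ κ : ℝ≥0, ∃ U ∈ 𝓝 xb, ∀ x ∈ U,
    (‖x - xb‖₊ : ℝ≥0∞) ≤ (κ : ℝ≥0∞) * EMetric.infEdist yb (Fm x)

/-- Metric regularity of a set-valued mapping around `(xb, yb)`. -/
def MetricallyRegularAround (Fm : X → Set Y) (xb : X) (yb : Y) : Prop :=
  ∃ κ : ℝ≥0, ∃ U ∈ 𝓝 xb, ∃ V ∈ 𝓝 yb, ∀ x ∈ U, ∀ y ∈ V,
    EMetric.infEdist x {x' | y ∈ Fm x'} ≤ (κ : ℝ≥0∞) * EMetric.infEdist y (Fm x)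

/-- Strong metric regularity of a set-valued mapping around `(xb, yb)`. -/
def StronglyRegularAround (Fm : X → Set Y) (xb : X) (yb : Y) : Prop :=
  MetricallyRegularAround Fm xb yb ∧
  ∃ (U' : Set X) (V' : Set Y) (h : Y → X), IsOpen U' ∧ IsOpen V' ∧
    xb ∈ U' ∧ yb ∈ V' ∧ h yb = xb ∧
    gphOf Fm ∩ (U' ×ˢ V') = {p | p.2 ∈ V' ∧ p.1 = h p.2}

end NormedDefs

section InnerDefs

variable {E F : Type*} [NormedAddCommGroup E] [InnerProductSpace ℝ E]
  [NormedAddCommGroup F] [InnerProductSpace ℝ F]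

/-- The regular (Fréchet) normal cone: the polar of the tangent cone. -/
def regNormal (Ω : Set E) (z : E) : Set E := {v | ∀ w ∈ tanCone Ω z, ⟪v, w⟫ ≤ 0}

/-- The limiting (Mordukhovich) normal cone. -/
def limNormal (Ω : Set E) (z : E) : Set E :=
  {v | ∃ zk vk : ℕ → E, (∀ k, zk k ∈ Ω) ∧ Tendsto zk atTop (𝓝 z) ∧
      (∀ k, vk k ∈ regNormal Ω (zk k)) ∧ Tendsto vk atTop (𝓝 v)}

/-- `Ω` is normally regular at `z`. -/
def NormallyRegularAt (Ω : Set E) (z : E) : Prop := regNormal Ω z = limNormal Ω z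

/-- The orthogonal complement (as a set) of a set. -/
def orthSet (s : Set E) : Set E := {v | ∀ w ∈ s, ⟪v, w⟫ = 0}

/-- `Ω` is semismooth* at `zb`. -/
def SemismoothStarAt (Ω : Set E) (zb : E) : Prop :=
  ∀ ε : ℝ, 0 < ε → ∃ δ > 0, ∀ z ∈ Ω, ‖z - zb‖ < δ → ∀ v ∈ limNormal Ω z,
    |⟪v, z - zb⟫| ≤ ε * ‖z - zb‖ * ‖v‖

/-- The canonical inner product of the product of two inner product spaces. -/
def inner2 (p q : E × F) : ℝ := ⟪p.1, q.1⟫ + ⟪p.2, q.2⟫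

/-- The regular normal cone for subsets of a product space. -/
def regNormal2 (Ω : Set (E × F)) (z : E × F) : Set (E × F) :=
  {v | ∀ w ∈ tanCone Ω z, inner2 v w ≤ 0}

/-- The limiting normal cone for subsets of a product space. -/
def limNormal2 (Ω : Set (E × F)) (z : E × F) : Set (E × F) :=
  {v | ∃ zk vk : ℕ → E × F, (∀ k, zk k ∈ Ω) ∧ Tendsto zk atTop (𝓝 z) ∧
      (∀ k, vk k ∈ regNormal2 Ω (zk k)) ∧ Tendsto vk atTop (𝓝 v)}

/-- Normal regularity for subsets of a product space. -/
def NormallyRegular2At (Ω : Set (E × F)) (z : E × F) : Prop :=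
  regNormal2 Ω z = limNormal2 Ω z

/-- Orthogonal complement (as a set) in a product space. -/
def orthSet2 (s : Set (E × F)) : Set (E × F) := {v | ∀ w ∈ s, inner2 v w = 0}

/-- The graph of the limiting coderivative of a mapping with graph `Γ` at `z`:
`{(y*, x*) : (x*, -y*) ∈ N_Γ(z)}`. -/
def coderivGraph (Γ : Set (E × F)) (z : E × F) : Set (F × E) :=
  {q | (q.2, -q.1) ∈ limNormal2 Γ z}

/-- The semismooth* property for subsets of a product space (i.e. for mappings). -/
def SemismoothStar2At (Ω : Set (E × F)) (zb : E × F) : Prop :=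
  ∀ ε : ℝ, 0 < ε → ∃ δ > 0, ∀ z ∈ Ω, ‖z - zb‖ < δ → ∀ v ∈ limNormal2 Ω z,
    |inner2 v (z - zb)| ≤ ε * ‖z - zb‖ * ‖v‖

/-- The regular subdifferential of an extended-real-valued function. -/
def regSubdiff (φ : E → EReal) (xb : E) : Set E :=
  {v | φ xb ≠ ⊤ ∧ φ xb ≠ ⊥ ∧ ∀ ε : ℝ, 0 < ε → ∃ δ > 0, ∀ x, ‖x - xb‖ < δ →
      φ xb + ((⟪v, x - xb⟫ - ε * ‖x - xb‖ : ℝ) : EReal) ≤ φ x}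

/-- The limiting (Mordukhovich) subdifferential. -/
def limSubdiff (φ : E → EReal) (xb : E) : Set E :=
  {v | ∃ xk vk : ℕ → E, Tendsto xk atTop (𝓝 xb) ∧
      Tendsto (fun k => φ (xk k)) atTop (𝓝 (φ xb)) ∧
      (∀ k, vk k ∈ regSubdiff φ (xk k)) ∧ Tendsto vk atTop (𝓝 v)}

/-- `φ` is prox-regular at `xb` for `vb` with parameters `r ≥ 0` and `ε > 0`. -/
def ProxRegular (φ : E → EReal) (xb vb : E) (r ε : ℝ) : Prop :=
  ∀ x' x v, ‖x' - xb‖ < ε → v ∈ limSubdiff φ x → ‖x - xb‖ < ε → ‖v - vb‖ < ε →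
    φ x < φ xb + (ε : EReal) →
    φ x + ((⟪v, x' - x⟫ - r / 2 * ‖x' - x‖ ^ 2 : ℝ) : EReal) ≤ φ x'

/-- The graph of the `φ`-attentive `ε`-localization of `∂φ` around `(xb, vb)`. -/
def attLocGraph (φ : E → EReal) (xb vb : E) (ε : ℝ) : Set (E × E) :=
  {p | p.2 ∈ limSubdiff φ p.1 ∧ ‖p.1 - xb‖ < ε ∧ ‖p.2 - vb‖ < ε ∧
      φ p.1 < φ xb + (ε : EReal)}

end InnerDefs

/-- The map `ℝⁿ → ℝᵈ × ℝᶜ` obtained from a permutation (re-indexing) of the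
coordinates followed by splitting them into the first `d` and the last `c` ones. -/
def permSplit {n d c : ℕ} (e : Fin n ≃ (Fin d ⊕ Fin c)) (z : Euc n) : Euc d × Euc c :=
  (show Euc d from WithLp.toLp 2 (fun i => z (e.symm (Sum.inl i))),
   show Euc c from WithLp.toLp 2 (fun j => z (e.symm (Sum.inr j))))

/-! If `gph F` were not semismooth* at `z̄ = (x̄, ȳ)`, there would be graph points `z_k → z̄`
and unit regular normals `v_k` at `z_k` with `|⟪v_k, w_k⟫| ≥ ε`, where `w_k` is the unit
direction from `z̄` to `z_k`. Along a subsequence `w_k → w`, a tangent direction at `z̄`, and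
`v_k → v`, a limiting normal at `z̄`. The paratingent cone is symmetric, so strict smoothness
puts both `w` and `-w` into the Clarke tangent cone, which is polar to the limiting normal
cone. Hence `⟪v, w⟫ = 0`, contradicting `|⟪v, w⟫| ≥ ε`. -/

section Cones

variable {X : Type*} [NormedAddCommGroup X] [NormedSpace ℝ X] {Ω : Set X} {z w : X}

theorem tanCone_subset_paraCone (hz : z ∈ Ω) : tanCone Ω z ⊆ paraCone Ω z :=
  fun _ ⟨t, wk, ht, ht0, hw, hΩ⟩ =>
    ⟨fun _ => z, t, wk, fun _ => hz, tendsto_const_nhds, ht, ht0, hw, hΩ⟩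

theorem neg_mem_paraCone (hw : w ∈ paraCone Ω z) : -w ∈ paraCone Ω z := by
  obtain ⟨zk, t, wk, hzΩ, hz, ht, ht0, hwk, hΩ⟩ := hw
  have hz' : Tendsto (fun k => zk k + t k • wk k) atTop (𝓝 z) := by
    simpa using hz.add (ht0.smul hwk)
  refine ⟨fun k => zk k + t k • wk k, t, fun k => -wk k, hΩ, hz', ht, ht0, hwk.neg, fun k => ?_⟩
  simpa only [smul_neg, add_neg_cancel_right] using hzΩ k

theorem mem_tanCone_of_tendsto {zk : ℕ → X} (hΩ : ∀ k, zk k ∈ Ω) (hne : ∀ k, zk k ≠ z)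
    (hz : Tendsto zk atTop (𝓝 z))
    (hw : Tendsto (fun k => ‖zk k - z‖⁻¹ • (zk k - z)) atTop (𝓝 w)) : w ∈ tanCone Ω z := by
  have hpos : ∀ k, 0 < ‖zk k - z‖ := fun k => norm_pos_iff.2 (sub_ne_zero.2 (hne k))
  refine ⟨fun k => ‖zk k - z‖, _, hpos, tendsto_iff_norm_sub_tendsto_zero.1 hz, hw,
    fun k => ?_⟩
  rw [smul_inv_smul₀ (hpos k).ne', add_sub_cancel]
  exact hΩ k

theorem exists_subseq_tendsto_unit [ProperSpace X] (x : ℕ → X) :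
    ∃ φ : ℕ → ℕ, StrictMono φ ∧ ∃ w, Tendsto (fun k => ‖x (φ k)‖⁻¹ • x (φ k)) atTop (𝓝 w) := by
  have hball : ∀ k, ‖x k‖⁻¹ • x k ∈ closedBall (0 : X) 1 := fun k => by
    rw [mem_closedBall_zero_iff, norm_smul, norm_inv, norm_norm]
    exact inv_mul_le_one
  obtain ⟨w, -, φ, hφ, hw⟩ := tendsto_subseq_of_bounded isBounded_closedBall hball
  exact ⟨φ, hφ, w, hw⟩

end Cones

section Normals

variable {E F : Type*} [NormedAddCommGroup E] [InnerProductSpace ℝ E]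
  [NormedAddCommGroup F] [InnerProductSpace ℝ F]

@[simp]
theorem inner2_smul_left (c : ℝ) (v w : E × F) : inner2 (c • v) w = c * inner2 v w := by
  simp only [inner2, Prod.smul_fst, Prod.smul_snd, real_inner_smul_left, mul_add]

@[simp]
theorem inner2_smul_right (c : ℝ) (v w : E × F) : inner2 v (c • w) = c * inner2 v w := by
  simp only [inner2, Prod.smul_fst, Prod.smul_snd, real_inner_smul_right, mul_add]

@[simp]
theorem inner2_neg_right (v w : E × F) : inner2 v (-w) = -inner2 v w := by
  simp only [inner2, Prod.fst_neg, Prod.snd_neg, inner_neg_right, neg_add]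

@[simp]
theorem inner2_zero_left (w : E × F) : inner2 0 w = 0 := by
  simp [inner2]

@[simp]
theorem inner2_zero_right (v : E × F) : inner2 v 0 = 0 := by
  simp [inner2]

theorem Filter.Tendsto.inner2 {α : Type*} {l : Filter α} {f g : α → E × F} {v w : E × F}
    (hf : Tendsto f l (𝓝 v)) (hg : Tendsto g l (𝓝 w)) :
    Tendsto (fun a => _root_.inner2 (f a) (g a)) l (𝓝 (_root_.inner2 v w)) :=
  (hf.fst_nhds.inner hg.fst_nhds).add (hf.snd_nhds.inner hg.snd_nhds)

theorem smul_mem_regNormal2 {Ω : Set (E × F)} {z v : E × F} (hv : v ∈ regNormal2 Ω z)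
    {c : ℝ} (hc : 0 ≤ c) : c • v ∈ regNormal2 Ω z := fun w hw => by
  rw [inner2_smul_left]
  exact mul_nonpos_of_nonneg_of_nonpos hc (hv w hw)

theorem lt_abs_inner2_unit {ε : ℝ} {v x : E × F} (h : ε * ‖x‖ * ‖v‖ < |inner2 v x|) :
    ε < |inner2 (‖v‖⁻¹ • v) (‖x‖⁻¹ • x)| := by
  have hv : 0 < ‖v‖ := norm_pos_iff.2 (by rintro rfl; simp at h)
  have hx : 0 < ‖x‖ := norm_pos_iff.2 (by rintro rfl; simp at h)
  rw [inner2_smul_left, inner2_smul_right, abs_mul, abs_mul, abs_inv, abs_inv, abs_norm,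
    abs_norm, lt_inv_mul_iff₀ hv, lt_inv_mul_iff₀ hx]
  linarith

theorem semismoothStar2At_of_eventually {Ω : Set (E × F)} {zb : E × F}
    (h : ∀ ε > 0, ∀ᶠ z in 𝓝[Ω] zb,
      ∀ v ∈ regNormal2 Ω z, |inner2 v (z - zb)| ≤ ε * ‖z - zb‖ * ‖v‖) :
    SemismoothStar2At Ω zb := by
  intro ε hε
  obtain ⟨δ, hδ, hball⟩ := Metric.eventually_nhds_iff.1 (eventually_nhdsWithin_iff.1 (h ε hε))
  refine ⟨δ, hδ, fun z _ hz v ⟨zk, vk, hzΩ, hzk, hvk, hv⟩ => ?_⟩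
  have hzk' := hzk.sub_const zb
  have hnear : ∀ᶠ k in atTop, ‖zk k - zb‖ < δ := hzk'.norm.eventually (gt_mem_nhds hz)
  refine le_of_tendsto_of_tendsto (hv.inner2 hzk').abs
    ((tendsto_const_nhds.mul hzk'.norm).mul hv.norm) ?_
  filter_upwards [hnear] with k hk
  exact hball (by rwa [dist_eq_norm]) (hzΩ k) (vk k) (hvk k)

variable [ProperSpace E] [ProperSpace F]

theorem eventually_inner2_le_of_mem_regNormal2 {Ω : Set (E × F)} {z v : E × F}
    (hv : v ∈ regNormal2 Ω z) {ε : ℝ} (hε : 0 < ε) :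
    ∀ᶠ z' in 𝓝[Ω] z, inner2 v (z' - z) ≤ ε * ‖z' - z‖ := by
  by_contra h
  obtain ⟨zk, hlim, hzk⟩ :=
    exists_seq_forall_of_frequently (frequently_nhdsWithin_iff.1 (not_eventually.1 h))
  have hne : ∀ k, zk k ≠ z := fun k hk => (hzk k).1 (by simp [hk])
  obtain ⟨φ, hφ, w, hw⟩ := exists_subseq_tendsto_unit (fun k => zk k - z)
  have hwT : w ∈ tanCone Ω z := mem_tanCone_of_tendsto (fun k => (hzk (φ k)).2)
    (fun k => hne (φ k)) (hlim.comp hφ.tendsto_atTop) hw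
  have hεw : ε ≤ inner2 v w := by
    refine ge_of_tendsto (tendsto_const_nhds.inner2 hw) (Eventually.of_forall fun k => ?_)
    have hpos : 0 < ‖zk (φ k) - z‖ := norm_pos_iff.2 (sub_ne_zero.2 (hne _))
    rw [inner2_smul_right, le_inv_mul_iff₀ hpos]
    linarith [not_le.1 (hzk (φ k)).1]
  linarith [hv w hwT]

theorem eventually_forall_smul_inner2_le_of_mem_regNormal2 {Ω : Set (E × F)} {z v : E × F}
    (hv : v ∈ regNormal2 Ω z) {ε : ℝ} (hε : 0 < ε) (R : ℝ) :
    ∀ᶠ t in 𝓝[>] (0 : ℝ), ∀ x, ‖x‖ ≤ R → z + t • x ∈ Ω → inner2 v x ≤ ε * ‖x‖ := by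
  obtain ⟨δ, hδ, hball⟩ := Metric.eventually_nhds_iff.1
    (eventually_nhdsWithin_iff.1 (eventually_inner2_le_of_mem_regNormal2 hv hε))
  filter_upwards [Ioo_mem_nhdsGT (div_pos hδ (by positivity : 0 < |R| + 1))]
    with t ⟨ht, htδ⟩ x hx hxΩ
  have hstep : ‖t • x‖ < δ := by
    rw [norm_smul, Real.norm_of_nonneg ht.le]
    rw [lt_div_iff₀ (by positivity)] at htδ
    nlinarith [le_abs_self R, norm_nonneg x]
  have h := hball (by rwa [dist_eq_norm, add_sub_cancel_left]) hxΩ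
  rw [add_sub_cancel_left, inner2_smul_right, norm_smul, Real.norm_of_nonneg ht.le] at h
  nlinarith

theorem inner2_nonpos_of_mem_clarkeCone {Ω : Set (E × F)} {z w u : E × F}
    (hw : w ∈ clarkeCone Ω z) (hu : u ∈ limNormal2 Ω z) : inner2 u w ≤ 0 := by
  obtain ⟨zk, uk, hzΩ, hz, hureg, hu⟩ := hu
  have hstep : ∀ k : ℕ, ∃ t ∈ Ioo (0 : ℝ) (1 / ((k : ℝ) + 1)), ∀ x, ‖x‖ ≤ ‖w‖ + 1 →
      zk k + t • x ∈ Ω → inner2 (uk k) x ≤ 1 / ((k : ℝ) + 1) * ‖x‖ := fun k =>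
    ((eventually_forall_smul_inner2_le_of_mem_regNormal2 (hureg k) Nat.one_div_pos_of_nat _).and
      (Ioo_mem_nhdsGT Nat.one_div_pos_of_nat)).exists.imp fun t ht => ⟨ht.2, ht.1⟩
  choose t ht hineq using hstep
  obtain ⟨wk, hwk, hwΩ⟩ := hw zk t hzΩ hz (fun k => (ht k).1) <|
    squeeze_zero (fun k => (ht k).1.le) (fun k => (ht k).2.le)
      tendsto_one_div_add_atTop_nhds_zero_nat
  have hbound : ∀ᶠ k in atTop, ‖wk k‖ ≤ ‖w‖ + 1 :=
    hwk.norm.eventually (eventually_le_nhds (lt_add_one _))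
  have hlim : Tendsto (fun k : ℕ => 1 / ((k : ℝ) + 1) * ‖wk k‖) atTop (𝓝 0) := by
    simpa using tendsto_one_div_add_atTop_nhds_zero_nat.mul hwk.norm
  exact le_of_tendsto_of_tendsto (hu.inner2 hwk) hlim
    (hbound.mono fun k hk => hineq k _ hk (hwΩ k))

theorem inner2_eq_zero_of_strictlySmoothAt {Ω : Set (E × F)} {z w u : E × F} (hz : z ∈ Ω)
    (hΩ : StrictlySmoothAt Ω z) (hw : w ∈ tanCone Ω z) (hu : u ∈ limNormal2 Ω z) :
    inner2 u w = 0 := by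
  have hwP : w ∈ paraCone Ω z := tanCone_subset_paraCone hz hw
  have hle := inner2_nonpos_of_mem_clarkeCone (hΩ ▸ hwP) hu
  have hge := inner2_nonpos_of_mem_clarkeCone (hΩ ▸ neg_mem_paraCone hwP) hu
  rw [inner2_neg_right] at hge
  linarith

theorem eventually_abs_inner2_le_of_strictlySmoothAt {Ω : Set (E × F)} {zb : E × F}
    (hzb : zb ∈ Ω) (hΩ : StrictlySmoothAt Ω zb) {ε : ℝ} (hε : 0 < ε) :
    ∀ᶠ z in 𝓝[Ω] zb, ∀ v ∈ regNormal2 Ω z, |inner2 v (z - zb)| ≤ ε * ‖z - zb‖ * ‖v‖ := by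
  by_contra h
  obtain ⟨zk, hlim, hzk⟩ :=
    exists_seq_forall_of_frequently (frequently_nhdsWithin_iff.1 (not_eventually.1 h))
  simp only [not_forall, not_le, exists_prop] at hzk
  choose hbad hzΩ using hzk
  choose vk hvreg hvlt using hbad
  have hne : ∀ k, zk k ≠ zb := fun k hk => by simpa [hk] using hvlt k
  obtain ⟨ψ, hψ, u, hu⟩ := exists_subseq_tendsto_unit vk
  obtain ⟨φ, hφ, w, hw⟩ := exists_subseq_tendsto_unit (fun k => zk (ψ k) - zb)
  have hlim' : Tendsto (fun k => zk (ψ (φ k))) atTop (𝓝 zb) :=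
    hlim.comp (hψ.comp hφ).tendsto_atTop
  have hu' := hu.comp hφ.tendsto_atTop
  have hwT : w ∈ tanCone Ω zb :=
    mem_tanCone_of_tendsto (fun _ => hzΩ _) (fun _ => hne _) hlim' hw
  have huN : u ∈ limNormal2 Ω zb := ⟨_, _, fun _ => hzΩ _, hlim',
    fun _ => smul_mem_regNormal2 (hvreg _) (inv_nonneg.2 (norm_nonneg _)), hu'⟩
  have hεu : ε ≤ |inner2 u w| :=
    ge_of_tendsto (hu'.inner2 hw).abs (.of_forall fun _ => (lt_abs_inner2_unit (hvlt _)).le)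
  rw [inner2_eq_zero_of_strictlySmoothAt hzb hΩ hwT huN, abs_zero] at hεu
  linarith

end Normals

theorem stmt_12_general {n m : ℕ} (F : Euc n → Set (Euc m)) (xb : Euc n) (yb : Euc m)
    (hy : yb ∈ F xb)
    (hspd : StrictlySmoothAt (gphOf F) (xb, yb)) :
    SemismoothStar2At (gphOf F) (xb, yb) :=
  semismoothStar2At_of_eventually fun _ hε =>
    eventually_abs_inner2_le_of_strictlySmoothAt hy hspd hε

/-- Theorem 3.5(ii): a mapping with locally closed graph which is
strictly proto-differentiable at `(xb, yb)` is semismooth* there. -/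
theorem stmt_12 {n m : ℕ} (F : Euc n → Set (Euc m)) (xb : Euc n) (yb : Euc m)
    (hy : yb ∈ F xb) (hloc : LocallyClosedAt (gphOf F) (xb, yb))
    (hspd : StrictlySmoothAt (gphOf F) (xb, yb)) :
    SemismoothStar2At (gphOf F) (xb, yb) :=
  stmt_12_general F xb yb hy hspd
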